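/- Let p ∈ [1, ∞), k ≥ 1, and let A ∈ ℝ^{n×t} be a matrix with t ≥ k columns. Then there exists a set L of k column indices of A such that Σ_{i=1}^{t} min_{x ∈ ℝ^k} |A_L x − A_i|_p^p ≤ (k+1)^p · min_{rank(B) ≤ k} |A − B|_p^p, where the inner minimum on the right is over all matrices B ∈ ℝ^{n×t} of rank at most k. -/

import Mathlib

/-!
Fix `B` of rank at most `k`, put `Δ = A - B` and let `e_i = |Δ_i|_p` be its column errors.
Choose `k` columns `L` such that every rescaled column `B_i / e_i` is a combination of the
rescaled columns `B_{L_j} / e_{L_j}` with coefficients in `[-1, 1]`: a set of columns of maximal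
volume does this, as in Auerbach's lemma. Then `B_i = B_L x` with `|x_j| e_{L_j} ≤ e_i`, hence
`|A_L x - A_i|_p = |Δ_L x - Δ_i|_p ≤ (k + 1) e_i`, and summing `p`-th powers over `i` gives
`(k + 1)^p |A - B|_p^p`. A column set minimizing the left-hand side then does at least as well
for every `B`. To keep the weights positive, `e_i` is replaced by `e_i + δ`, and `δ → 0` at the end.
-/

open Matrix

/-- The entrywise `ℓ_p` norm of a vector in `ℝ^n`, for real `p`. -/
noncomputable def vecLpNorm {n : ℕ} (p : ℝ) (v : Fin n → ℝ) : ℝ :=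
  (∑ j, |v j| ^ p) ^ (1 / p)

/-- The entrywise `ℓ_p` norm of a matrix `M ∈ ℝ^{n×t}`, for real `p`. -/
noncomputable def matLpNorm {n t : ℕ} (p : ℝ) (M : Matrix (Fin n) (Fin t) ℝ) : ℝ :=
  (∑ i, ∑ j, |M i j| ^ p) ^ (1 / p)

open Finset Module Submodule Function

lemma vecLpNorm_nonneg {n : ℕ} (p : ℝ) (v : Fin n → ℝ) : 0 ≤ vecLpNorm p v :=
  Real.rpow_nonneg (sum_nonneg fun _ _ => Real.rpow_nonneg (abs_nonneg _) p) _

lemma vecLpNorm_eq_norm_toLp {n : ℕ} {p : ℝ} (hp : 0 < p) (v : Fin n → ℝ) :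
    vecLpNorm p v = ‖WithLp.toLp (ENNReal.ofReal p) v‖ := by
  rw [PiLp.norm_eq_sum (by rwa [ENNReal.toReal_ofReal hp.le]), ENNReal.toReal_ofReal hp.le]
  rfl

lemma vecLpNorm_rpow {n : ℕ} {p : ℝ} (hp : p ≠ 0) (v : Fin n → ℝ) :
    vecLpNorm p v ^ p = ∑ j, |v j| ^ p := by
  rw [vecLpNorm, ← Real.rpow_mul (by positivity), one_div_mul_cancel hp, Real.rpow_one]

lemma matLpNorm_rpow {n t : ℕ} {p : ℝ} (hp : p ≠ 0) (M : Matrix (Fin n) (Fin t) ℝ) :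
    matLpNorm p M ^ p = ∑ j, vecLpNorm p (Mᵀ j) ^ p := by
  rw [matLpNorm, ← Real.rpow_mul (by positivity), one_div_mul_cancel hp, Real.rpow_one,
    sum_comm]
  simp_rw [vecLpNorm_rpow hp]
  rfl

lemma vecLpNorm_sum_smul_sub_le {n : ℕ} {p : ℝ} (hp : 1 ≤ p) {κ : Type*} [Fintype κ]
    (x : κ → ℝ) (d : κ → Fin n → ℝ) (d₀ : Fin n → ℝ) :
    vecLpNorm p (∑ j, x j • d j - d₀) ≤ ∑ j, |x j| * vecLpNorm p (d j) + vecLpNorm p d₀ := by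
  have : Fact (1 ≤ ENNReal.ofReal p) := ⟨by simpa using hp⟩
  simp only [vecLpNorm_eq_norm_toLp (zero_lt_one.trans_le hp), WithLp.toLp_sub, WithLp.toLp_sum,
    WithLp.toLp_smul]
  refine (norm_sub_le _ _).trans (add_le_add_left ((norm_sum_le _ _).trans_eq ?_) _)
  simp only [norm_smul, Real.norm_eq_abs]

section SpansWithCoeffsLeOne

variable {V V' ι κ : Type*} [AddCommGroup V] [Module ℝ V] [AddCommGroup V'] [Module ℝ V']
  [Fintype κ]

def SpansWithCoeffsLeOne (v : ι → V) (L : κ → ι) : Prop :=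
  ∀ i, ∃ c : κ → ℝ, (∀ j, |c j| ≤ 1) ∧ v i = ∑ j, c j • v (L j)

lemma SpansWithCoeffsLeOne.map {v : ι → V} {L : κ → ι} (h : SpansWithCoeffsLeOne v L)
    (f : V →ₗ[ℝ] V') : SpansWithCoeffsLeOne (f ∘ v) L := fun i => by
  obtain ⟨c, hc, hv⟩ := h i
  exact ⟨c, hc, by simp [hv]⟩

lemma SpansWithCoeffsLeOne.of_range_subset {κ' : Type*} [Fintype κ'] {v : ι → V} {S : κ → ι}
    {L : κ' → ι} (h : SpansWithCoeffsLeOne v S) (hS : Injective S)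
    (hSL : Set.range S ⊆ Set.range L) : SpansWithCoeffsLeOne v L := by
  classical
  choose g hg using fun a => hSL (Set.mem_range_self a)
  have hg_inj : Injective g := fun a b hab => hS (by rw [← hg a, ← hg b, hab])
  intro i
  obtain ⟨c, hc, hv⟩ := h i
  refine ⟨extend g c 0, fun j => ?_, ?_⟩
  · by_cases hj : ∃ a, g a = j
    · obtain ⟨a, rfl⟩ := hj
      rw [hg_inj.extend_apply]
      exact hc a
    · simp [extend_apply' _ _ _ hj]
  · rw [hv, ← sum_subset (subset_univ (univ.image g)), sum_image]
    · simp [hg_inj.extend_apply, hg]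
    · exact fun a _ b _ hab => hg_inj hab
    · intro j _ hj
      simp only [mem_image, mem_univ, true_and] at hj
      simp [extend_apply' _ _ _ hj]

-- Choose the members maximizing `|e.det|`; by Cramer's rule every coordinate in terms of them
-- is a quotient of two such determinants.
lemma exists_spansWithCoeffsLeOne_of_span_eq_top [FiniteDimensional ℝ V] [Fintype ι]
    (v : ι → V) (hv : span ℝ (Set.range v) = ⊤) :
    ∃ S : Fin (finrank ℝ V) → ι, Injective S ∧ SpansWithCoeffsLeOne v S := by
  classical
  let e := finBasis ℝ V
  obtain ⟨κ₀, a, ha, ha_span, ha_li⟩ := exists_linearIndependent' ℝ v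
  have : Fintype κ₀ := Fintype.ofInjective a ha
  let b₀ := Basis.mk ha_li (by rw [ha_span, hv])
  let S₀ : Fin (finrank ℝ V) → ι := a ∘ (b₀.indexEquiv e).symm
  have hS₀ : e.det (v ∘ S₀) ≠ 0 := by
    refine (e.is_basis_iff_det.1 ⟨ha_li.comp _ (Equiv.injective _), ?_⟩).ne_zero
    rw [Set.range_comp, Equiv.range_eq_univ, Set.image_univ, ha_span, hv]
  obtain ⟨S, -, hS⟩ := exists_max_image univ (fun S => |e.det (v ∘ S)|) ⟨S₀, mem_univ _⟩
  have hS_ne : e.det (v ∘ S) ≠ 0 := fun h0 => hS₀ (abs_eq_zero.1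
    (le_antisymm (by simpa [h0] using hS S₀ (mem_univ _)) (abs_nonneg _)))
  obtain ⟨hS_li, hS_span⟩ := e.is_basis_iff_det.2 (isUnit_iff_ne_zero.2 hS_ne)
  let b := Basis.mk hS_li hS_span.ge
  refine ⟨S, hS_li.injective.of_comp, fun i => ⟨fun j => b.coord j (v i), fun j => ?_, ?_⟩⟩
  · have hcramer := congrArg (· (v i)) (e.det_smul_mk_coord_eq_det_update hS_li hS_span.ge j)
    simp only [LinearMap.smul_apply, smul_eq_mul, MultilinearMap.toLinearMap_apply,
      AlternatingMap.coe_multilinearMap, ← comp_update] at hcramer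
    have := hS (update S j i) (mem_univ _)
    rw [← hcramer, abs_mul] at this
    exact (mul_le_iff_le_one_right (abs_pos.2 hS_ne)).1 this
  · conv_lhs => rw [← b.sum_repr (v i)]
    simp [b]

lemma exists_spansWithCoeffsLeOne [Fintype ι] (v : ι → V) :
    ∃ S : Fin (finrank ℝ (span ℝ (Set.range v))) → ι, Injective S ∧ SpansWithCoeffsLeOne v S := by
  let W := span ℝ (Set.range v)
  have : FiniteDimensional ℝ W := .span_of_finite ℝ (Set.finite_range v)
  let v' : ι → W := fun i => ⟨v i, subset_span (Set.mem_range_self i)⟩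
  have hv' : span ℝ (Set.range v') = ⊤ := by
    apply map_injective_of_injective W.injective_subtype
    rw [map_span, map_subtype_top, ← Set.range_comp]
    rfl
  obtain ⟨S, hS, hspan⟩ := exists_spansWithCoeffsLeOne_of_span_eq_top v' hv'
  exact ⟨S, hS, hspan.map W.subtype⟩

lemma exists_injective_spansWithCoeffsLeOne {t k : ℕ} (v : Fin t → V)
    (hrank : finrank ℝ (span ℝ (Set.range v)) ≤ k) (hkt : k ≤ t) :
    ∃ L : Fin k → Fin t, Injective L ∧ SpansWithCoeffsLeOne v L := by
  classical
  obtain ⟨S, hS, hspan⟩ := exists_spansWithCoeffsLeOne v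
  obtain ⟨T, hST, hT⟩ := Finset.exists_superset_card_eq (s := univ.image S) (n := k)
    (by rwa [card_image_of_injective _ hS, card_univ, Fintype.card_fin]) (by simpa using hkt)
  refine ⟨T.orderEmbOfFin hT, (T.orderEmbOfFin hT).injective, hspan.of_range_subset hS ?_⟩
  rw [range_orderEmbOfFin]
  rintro _ ⟨a, rfl⟩
  exact hST (mem_image_of_mem S (mem_univ a))

lemma exists_injective_weighted_coeffs {t k : ℕ} (b : Fin t → V) (w : Fin t → ℝ)
    (hw : ∀ i, 0 < w i) (hrank : finrank ℝ (span ℝ (Set.range b)) ≤ k) (hkt : k ≤ t) :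
    ∃ L : Fin k → Fin t, Injective L ∧ ∀ i, ∃ x : Fin k → ℝ,
      (∀ j, |x j| * w (L j) ≤ w i) ∧ b i = ∑ j, x j • b (L j) := by
  have : FiniteDimensional ℝ (span ℝ (Set.range b)) := .span_of_finite ℝ (Set.finite_range b)
  have hle : span ℝ (Set.range fun i => (w i)⁻¹ • b i) ≤ span ℝ (Set.range b) :=
    span_le.2 <| Set.range_subset_iff.2 fun i => smul_mem _ _ (subset_span (Set.mem_range_self i))
  obtain ⟨L, hL, hspan⟩ := exists_injective_spansWithCoeffsLeOne (fun i => (w i)⁻¹ • b i)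
    ((finrank_mono hle).trans hrank) hkt
  refine ⟨L, hL, fun i => ?_⟩
  obtain ⟨c, hc, hbi⟩ := hspan i
  dsimp only at hbi
  refine ⟨fun j => c j * (w i / w (L j)), fun j => ?_, ?_⟩
  · rw [abs_mul, abs_of_pos (div_pos (hw i) (hw (L j))), mul_assoc,
      div_mul_cancel₀ _ (hw (L j)).ne']
    exact mul_le_of_le_one_left (hw i).le (hc j)
  · calc b i = w i • (w i)⁻¹ • b i := by rw [smul_smul, mul_inv_cancel₀ (hw i).ne', one_smul]
      _ = ∑ j, (c j * (w i / w (L j))) • b (L j) := by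
        rw [hbi, smul_sum]
        refine sum_congr rfl fun j _ => ?_
        rw [smul_smul, smul_smul, div_eq_mul_inv]
        ring_nf

end SpansWithCoeffsLeOne

section Regression

variable {n t k : ℕ}

noncomputable def regressionCost (p : ℝ) (A : Matrix (Fin n) (Fin t) ℝ) (L : Fin k → Fin t)
    (i : Fin t) : ℝ :=
  sInf {c : ℝ | ∃ x : Fin k → ℝ,
    c = (vecLpNorm p (fun r => (A.submatrix id L *ᵥ x) r - A r i)) ^ p}

lemma regressionCost_le (p : ℝ) (A : Matrix (Fin n) (Fin t) ℝ) (L : Fin k → Fin t) (i : Fin t)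
    (x : Fin k → ℝ) :
    regressionCost p A L i ≤ vecLpNorm p (∑ j, x j • Aᵀ (L j) - Aᵀ i) ^ p := by
  refine csInf_le ⟨0, ?_⟩ ⟨x, ?_⟩
  · rintro _ ⟨y, rfl⟩
    exact Real.rpow_nonneg (vecLpNorm_nonneg p _) p
  · rw [mulVec_eq_sum]
    congr 2
    ext r
    simp [mul_comm]

lemma exists_injective_regressionCost_le {p : ℝ} (hp : 1 ≤ p) (hkt : k ≤ t)
    (A B : Matrix (Fin n) (Fin t) ℝ) (hB : B.rank ≤ k) {δ : ℝ} (hδ : 0 < δ) :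
    ∃ L : Fin k → Fin t, Injective L ∧ ∀ i,
      regressionCost p A L i ≤ (((k : ℝ) + 1) * (vecLpNorm p ((A - B)ᵀ i) + δ)) ^ p := by
  set w : Fin t → ℝ := fun i => vecLpNorm p ((A - B)ᵀ i) + δ
  have hew : ∀ i, vecLpNorm p ((A - B)ᵀ i) ≤ w i := fun i => le_add_of_nonneg_right hδ.le
  have hw : ∀ i, 0 < w i := fun i => (vecLpNorm_nonneg p _).trans_lt (lt_add_of_pos_right _ hδ)
  obtain ⟨L, hL, hcoeffs⟩ := exists_injective_weighted_coeffs (fun i => Bᵀ i) w hw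
    ((rank_eq_finrank_span_cols B).ge.trans hB) hkt
  refine ⟨L, hL, fun i => ?_⟩
  obtain ⟨x, hx, hBi⟩ := hcoeffs i
  have hres : ∑ j, x j • Aᵀ (L j) - Aᵀ i = ∑ j, x j • (A - B)ᵀ (L j) - (A - B)ᵀ i := by
    have hcol : ∀ j, (A - B)ᵀ j = Aᵀ j - Bᵀ j := fun j => rfl
    simp only [hcol, smul_sub, sum_sub_distrib, ← hBi]
    abel
  refine (regressionCost_le p A L i x).trans
    (Real.rpow_le_rpow (vecLpNorm_nonneg p _) ?_ (zero_le_one.trans hp))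
  calc vecLpNorm p (∑ j, x j • Aᵀ (L j) - Aᵀ i)
      ≤ ∑ j, |x j| * vecLpNorm p ((A - B)ᵀ (L j)) + vecLpNorm p ((A - B)ᵀ i) := by
        rw [hres]; exact vecLpNorm_sum_smul_sub_le hp _ _ _
    _ ≤ ∑ _j : Fin k, w i + w i := by
        refine add_le_add (sum_le_sum fun j _ => ?_) (hew i)
        exact (mul_le_mul_of_nonneg_left (hew _) (abs_nonneg _)).trans (hx j)
    _ = ((k : ℝ) + 1) * w i := by simp; ring

lemma sum_regressionCost_le_of_forall_le {p : ℝ} (hp : 1 ≤ p) (hkt : k ≤ t)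
    (A : Matrix (Fin n) (Fin t) ℝ) {L₀ : Fin k → Fin t}
    (hL₀ : ∀ L : Fin k → Fin t, Injective L →
      ∑ i, regressionCost p A L₀ i ≤ ∑ i, regressionCost p A L i)
    (B : Matrix (Fin n) (Fin t) ℝ) (hB : B.rank ≤ k) :
    ∑ i, regressionCost p A L₀ i ≤ ((k : ℝ) + 1) ^ p * matLpNorm p (A - B) ^ p := by
  have hp₀ : 0 < p := zero_lt_one.trans_le hp
  set g : ℝ → ℝ := fun δ => ∑ i, (((k : ℝ) + 1) * (vecLpNorm p ((A - B)ᵀ i) + δ)) ^ p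
  have hg : Continuous g := by simp only [g]; fun_prop (disch := exact hp₀.le)
  have hslack : ∀ δ ∈ Set.Ioi (0 : ℝ), ∑ i, regressionCost p A L₀ i ≤ g δ := fun δ hδ => by
    obtain ⟨L, hL, hcost⟩ := exists_injective_regressionCost_le hp hkt A B hB hδ
    exact (hL₀ L hL).trans (sum_le_sum fun i _ => hcost i)
  calc ∑ i, regressionCost p A L₀ i ≤ g 0 :=
        ge_of_tendsto (hg.tendsto 0 |>.mono_left nhdsWithin_le_nhds)
          (eventually_nhdsWithin_of_forall hslack)
    _ = ((k : ℝ) + 1) ^ p * matLpNorm p (A - B) ^ p := by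
        simp only [g, add_zero, matLpNorm_rpow hp₀.ne', mul_sum]
        exact sum_congr rfl fun i _ => Real.mul_rpow (by positivity) (vecLpNorm_nonneg p _)

end Regression

theorem exists_column_subset_regression_bound_general
    {n t k : ℕ} (p : ℝ) (hp : 1 ≤ p) (ht : k ≤ t)
    (A : Matrix (Fin n) (Fin t) ℝ) :
    ∃ L : Fin k → Fin t, Function.Injective L ∧
      (∑ i : Fin t, sInf {c : ℝ | ∃ x : Fin k → ℝ,
            c = (vecLpNorm p (fun r => (A.submatrix id L *ᵥ x) r - A r i)) ^ p})
        ≤ ((k : ℝ) + 1) ^ p *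
          sInf {c : ℝ | ∃ B : Matrix (Fin n) (Fin t) ℝ, B.rank ≤ k ∧
            c = (matLpNorm p (A - B)) ^ p} := by
  have : Nonempty (Fin k ↪ Fin t) := ⟨Fin.castLEEmb ht⟩
  obtain ⟨L₀, hL₀⟩ := Finite.exists_min fun L : Fin k ↪ Fin t => ∑ i, regressionCost p A L i
  refine ⟨L₀, L₀.injective, ?_⟩
  have hC : 0 < ((k : ℝ) + 1) ^ p := by positivity
  refine (div_le_iff₀' hC).1 (le_csInf ⟨_, 0, by simp, rfl⟩ ?_)
  rintro _ ⟨B, hB, rfl⟩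
  exact (div_le_iff₀' hC).2 <|
    sum_regressionCost_le_of_forall_le hp ht A (fun L hL => hL₀ ⟨L, hL⟩) B hB

/-- For `p ∈ [1, ∞)`, `k ≥ 1` and `A ∈ ℝ^{n×t}` with `t ≥ k` columns, there is a
set `L` of `k` column indices such that
`∑_i min_x |A_L x - A_i|_p^p ≤ (k+1)^p · min_{rank B ≤ k} |A - B|_p^p`. -/
theorem exists_column_subset_regression_bound
    {n t k : ℕ} (p : ℝ) (hp : 1 ≤ p) (hk : 1 ≤ k) (ht : k ≤ t)
    (A : Matrix (Fin n) (Fin t) ℝ) :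
    ∃ L : Fin k → Fin t, Function.Injective L ∧
      (∑ i : Fin t, sInf {c : ℝ | ∃ x : Fin k → ℝ,
            c = (vecLpNorm p (fun r => (A.submatrix id L *ᵥ x) r - A r i)) ^ p})
        ≤ ((k : ℝ) + 1) ^ p *
          sInf {c : ℝ | ∃ B : Matrix (Fin n) (Fin t) ℝ, B.rank ≤ k ∧
            c = (matLpNorm p (A - B)) ^ p} :=
  exists_column_subset_regression_bound_general p hp ht A
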